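/- Let G be a group, ρ₁, ρ₂ : G → SL₂(ℤ) group homomorphisms, and w₁, w₂ : G → ℤ² maps such that wᵢ(gh) = wᵢ(g) + ρᵢ(g)·wᵢ(h) for all g, h ∈ G and i = 1, 2. Assume for i = 1, 2: (i) for every nonzero v ∈ ℤ² there exists g ∈ G such that ρᵢ(g)·v and v are ℤ-linearly independent; (ii) the set {wᵢ(g) : g ∈ ker ρᵢ} contains two ℤ-linearly independent vectors; and (iii) there exists g ∈ ker ρ₂ with ρ₁(g) ≠ 1 and there exists g' ∈ ker ρ₁ with ρ₂(g') ≠ 1. Then the additive subgroup K = {(w₁(g), w₂(g)) : g ∈ ker ρ₁ ∩ ker ρ₂} of ℤ² × ℤ² spans a ℚ-subspace of ℚ⁴ of dimension exactly 2 or exactly 4. -/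
import Mathlib


/-- Two vectors of `ℤ²` are `ℤ`-linearly independent. -/
def ZIndep (v w : Fin 2 → ℤ) : Prop :=
  ∀ a b : ℤ, a • v + b • w = 0 → a = 0 ∧ b = 0

/-- The embedding of `ℤ²` into `ℚ²`. -/
def castQ (u : Fin 2 → ℤ) : Fin 2 → ℚ := fun i => (u i : ℚ)

/-! ### Auxiliary lemmas -/

/-- The entrywise cast of an integer matrix to a rational matrix. -/
def matQ (M : Matrix (Fin 2) (Fin 2) ℤ) : Matrix (Fin 2) (Fin 2) ℚ := M.map (Int.cast)

lemma castQ_mulVec (M : Matrix (Fin 2) (Fin 2) ℤ) (v : Fin 2 → ℤ) :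
    castQ (M.mulVec v) = (matQ M).mulVec (castQ v) := by
  funext i
  simp [castQ, matQ, Matrix.mulVec, dotProduct, Fin.sum_univ_two]

lemma castQ_eq_zero {v : Fin 2 → ℤ} (h : castQ v = 0) : v = 0 := by
  funext i
  have := congrFun h i
  simpa [castQ] using this

lemma zindep_cross {v w : Fin 2 → ℤ} (h : ZIndep v w) :
    v 0 * w 1 - v 1 * w 0 ≠ 0 := by
  intro hc
  have h1 := h (w 1) (-(v 1)) (by
    funext i
    fin_cases i
    · show w 1 * v 0 + -(v 1) * w 0 = 0
      linarith
    · show w 1 * v 1 + -(v 1) * w 1 = 0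
      ring)
  obtain ⟨hw1, hv1⟩ := h1
  have hv1 : v 1 = 0 := by omega
  have h2 := h (w 0) (-(v 0)) (by
    funext i
    fin_cases i
    · show w 0 * v 0 + -(v 0) * w 0 = 0
      ring
    · show w 0 * v 1 + -(v 0) * w 1 = 0
      rw [hv1, hw1]; ring)
  obtain ⟨hw0, hv0⟩ := h2
  have hv0 : v 0 = 0 := by omega
  have h3 := h 1 0 (by
    funext i
    fin_cases i
    · show 1 * v 0 + 0 * w 0 = 0
      rw [hv0]; ring
    · show 1 * v 1 + 0 * w 1 = 0
      rw [hv1]; ring)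
  exact one_ne_zero h3.1

lemma matrix_eq_zero_of_kills {M : Matrix (Fin 2) (Fin 2) ℤ} {v w : Fin 2 → ℤ}
    (h : ZIndep v w) (hv : M.mulVec v = 0) (hw : M.mulVec w = 0) : M = 0 := by
  have hc := zindep_cross h
  have ev0 := congrFun hv 0
  have ev1 := congrFun hv 1
  have ew0 := congrFun hw 0
  have ew1 := congrFun hw 1
  simp [Matrix.mulVec, dotProduct, Fin.sum_univ_two] at ev0 ev1 ew0 ew1
  ext i j
  fin_cases i <;> fin_cases j <;> simp
  · have : M 0 0 * (v 0 * w 1 - v 1 * w 0) = 0 := by linear_combination w 1 * ev0 - v 1 * ew0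
    exact (mul_eq_zero.mp this).resolve_right hc
  · have : M 0 1 * (v 0 * w 1 - v 1 * w 0) = 0 := by linear_combination v 0 * ew0 - w 0 * ev0
    exact (mul_eq_zero.mp this).resolve_right hc
  · have : M 1 0 * (v 0 * w 1 - v 1 * w 0) = 0 := by linear_combination w 1 * ev1 - v 1 * ew1
    exact (mul_eq_zero.mp this).resolve_right hc
  · have : M 1 1 * (v 0 * w 1 - v 1 * w 0) = 0 := by linear_combination v 0 * ew1 - w 0 * ev1
    exact (mul_eq_zero.mp this).resolve_right hc

section Cocycle
variable {G : Type*} [Group G] (ρ : G →* Matrix.SpecialLinearGroup (Fin 2) ℤ)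
  (w : G → Fin 2 → ℤ)
  (hw : ∀ g h : G, w (g * h) = w g + (ρ g : Matrix (Fin 2) (Fin 2) ℤ).mulVec (w h))

include hw

lemma cocycle_one : w 1 = 0 := by
  have := hw 1 1
  simp only [mul_one, map_one, Matrix.SpecialLinearGroup.coe_one, Matrix.one_mulVec] at this
  have h2 : w 1 + 0 = w 1 + w 1 := by rw [add_zero]; exact this
  exact (add_left_cancel h2).symm

lemma cocycle_self_inv (g : G) :
    w g + (ρ g : Matrix (Fin 2) (Fin 2) ℤ).mulVec (w g⁻¹) = 0 := by
  have := (hw g g⁻¹).symm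
  rw [mul_inv_cancel] at this
  rw [this, cocycle_one ρ w hw]

lemma cocycle_conj {k : G} (hk : ρ k = 1) (g : G) :
    w (g * k * g⁻¹) = (ρ g : Matrix (Fin 2) (Fin 2) ℤ).mulVec (w k) := by
  rw [hw (g * k) g⁻¹, hw g k, map_mul, hk, mul_one]
  have h0 := cocycle_self_inv ρ w hw g
  have heq : w g + ((ρ g : Matrix (Fin 2) (Fin 2) ℤ).mulVec (w k) +
      (ρ g : Matrix (Fin 2) (Fin 2) ℤ).mulVec (w g⁻¹)) =
      (ρ g : Matrix (Fin 2) (Fin 2) ℤ).mulVec (w k) + (w g +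
      (ρ g : Matrix (Fin 2) (Fin 2) ℤ).mulVec (w g⁻¹)) := by ring
  rw [add_assoc, heq, h0, add_zero]

lemma cocycle_inv_ker {g : G} (hg : ρ g = 1) : w g⁻¹ = -(w g) := by
  have := cocycle_self_inv ρ w hw g
  rw [hg] at this
  simp only [Matrix.SpecialLinearGroup.coe_one, Matrix.one_mulVec] at this
  exact eq_neg_of_add_eq_zero_right this

lemma cocycle_comm {g : G} (hg : ρ g = 1) (h : G) :
    w (h * g * h⁻¹ * g⁻¹) =
      ((ρ h : Matrix (Fin 2) (Fin 2) ℤ) - 1).mulVec (w g) := by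
  rw [hw (h * g * h⁻¹) g⁻¹, cocycle_conj ρ w hw hg h]
  have hcoe : (ρ (h * g * h⁻¹) : Matrix (Fin 2) (Fin 2) ℤ) = 1 := by
    rw [map_mul, map_mul, hg, mul_one, map_inv, mul_inv_cancel]
    simp
  rw [hcoe, Matrix.one_mulVec, cocycle_inv_ker ρ w hw hg, Matrix.sub_mulVec,
    Matrix.one_mulVec]
  abel

end Cocycle

lemma span_top_of_cross {x y : Fin 2 → ℚ} (hc : x 0 * y 1 - x 1 * y 0 ≠ 0)
    {W : Submodule ℚ (Fin 2 → ℚ)} (hx : x ∈ W) (hy : y ∈ W) : W = ⊤ := by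
  rw [eq_top_iff]
  intro u _
  set c := x 0 * y 1 - x 1 * y 0 with hcdef
  have hu : u = ((u 0 * y 1 - u 1 * y 0) / c) • x + ((x 0 * u 1 - x 1 * u 0) / c) • y := by
    funext i
    fin_cases i
    · show u 0 = (u 0 * y 1 - u 1 * y 0) / c * x 0 + (x 0 * u 1 - x 1 * u 0) / c * y 0
      field_simp
      ring
    · show u 1 = (u 0 * y 1 - u 1 * y 0) / c * x 1 + (x 0 * u 1 - x 1 * u 0) / c * y 1
      field_simp
      ring
  rw [hu]
  exact W.add_mem (W.smul_mem _ hx) (W.smul_mem _ hy)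

lemma exists_int_vec {x : Fin 2 → ℚ} (hx : x ≠ 0) :
    ∃ (v : Fin 2 → ℤ) (q : ℚ), v ≠ 0 ∧ q ≠ 0 ∧ castQ v = q • x := by
  refine ⟨![(x 0).num * (x 1).den, (x 1).num * (x 0).den],
    ((x 0).den : ℚ) * ((x 1).den : ℚ), ?_, ?_, ?_⟩
  · intro h
    have h0 : (x 0).num * ((x 1).den : ℤ) = 0 := by simpa using congrFun h 0
    have h1 : (x 1).num * ((x 0).den : ℤ) = 0 := by simpa using congrFun h 1
    have d0 : ((x 0).den : ℤ) ≠ 0 := Int.natCast_ne_zero.mpr (x 0).den_nz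
    have d1 : ((x 1).den : ℤ) ≠ 0 := Int.natCast_ne_zero.mpr (x 1).den_nz
    have n0 : (x 0).num = 0 := by
      rcases mul_eq_zero.mp h0 with h | h
      · exact h
      · exact absurd h d1
    have n1 : (x 1).num = 0 := by
      rcases mul_eq_zero.mp h1 with h | h
      · exact h
      · exact absurd h d0
    apply hx
    funext i
    fin_cases i
    · exact Rat.num_eq_zero.mp n0
    · exact Rat.num_eq_zero.mp n1
  · positivity
  · funext i
    have e0 : ((x 0).num : ℚ) = x 0 * (x 0).den := (Rat.mul_den_eq_num _).symm
    have e1 : ((x 1).num : ℚ) = x 1 * (x 1).den := (Rat.mul_den_eq_num _).symm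
    fin_cases i
    · show (((x 0).num * ((x 1).den : ℤ) : ℤ) : ℚ) = ((x 0).den : ℚ) * ((x 1).den : ℚ) * x 0
      push_cast
      rw [e0]; ring
    · show (((x 1).num * ((x 0).den : ℤ) : ℤ) : ℚ) = ((x 0).den : ℚ) * ((x 1).den : ℚ) * x 1
      push_cast
      rw [e1]; ring

lemma invariant_eq_top {G : Type*} [Group G]
    (ρ : G →* Matrix.SpecialLinearGroup (Fin 2) ℤ)
    (hirr : ∀ v : Fin 2 → ℤ, v ≠ 0 →
      ∃ g : G, ZIndep ((ρ g : Matrix (Fin 2) (Fin 2) ℤ).mulVec v) v)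
    (W : Submodule ℚ (Fin 2 → ℚ))
    (hinv : ∀ g : G, ∀ y ∈ W, (matQ (ρ g)).mulVec y ∈ W)
    (hne : W ≠ ⊥) : W = ⊤ := by
  obtain ⟨x, hxW, hx0⟩ := (Submodule.ne_bot_iff W).mp hne
  obtain ⟨v, q, hv0, hq0, hvq⟩ := exists_int_vec hx0
  have hvW : castQ v ∈ W := by rw [hvq]; exact W.smul_mem q hxW
  obtain ⟨g, hg⟩ := hirr v hv0
  have hMW : castQ ((ρ g : Matrix (Fin 2) (Fin 2) ℤ).mulVec v) ∈ W := by
    rw [castQ_mulVec]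
    exact hinv g _ hvW
  have hc := zindep_cross hg
  refine span_top_of_cross ?_ hMW hvW
  have : ((((ρ g : Matrix (Fin 2) (Fin 2) ℤ).mulVec v) 0 * v 1
      - ((ρ g : Matrix (Fin 2) (Fin 2) ℤ).mulVec v) 1 * v 0 : ℤ) : ℚ) ≠ 0 :=
    Int.cast_ne_zero.mpr hc
  show castQ _ 0 * castQ v 1 - castQ _ 1 * castQ v 0 ≠ 0
  simpa [castQ] using this

lemma exists_K_nonzero {G : Type*} [Group G]
    (ρ ρ' : G →* Matrix.SpecialLinearGroup (Fin 2) ℤ)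
    (w : G → Fin 2 → ℤ)
    (hw : ∀ g h : G, w (g * h) = w g + (ρ g : Matrix (Fin 2) (Fin 2) ℤ).mulVec (w h))
    (hrk : ∃ g ∈ ρ.ker, ∃ g' ∈ ρ.ker, ZIndep (w g) (w g'))
    (hne : ∃ h ∈ ρ'.ker, ρ h ≠ 1) :
    ∃ k : G, ρ k = 1 ∧ ρ' k = 1 ∧ w k ≠ 0 := by
  obtain ⟨g, hg, g', hg', hind⟩ := hrk
  obtain ⟨h, hh', hhne⟩ := hne
  rw [MonoidHom.mem_ker] at hg hg' hh'
  set M : Matrix (Fin 2) (Fin 2) ℤ := (ρ h : Matrix (Fin 2) (Fin 2) ℤ) - 1 with hM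
  have hker : ∀ x : G, ρ x = 1 → ρ (h * x * h⁻¹ * x⁻¹) = 1 ∧ ρ' (h * x * h⁻¹ * x⁻¹) = 1 := by
    intro x hx
    constructor
    · simp [map_mul, map_inv, hx]
    · simp [map_mul, map_inv, hh']
  by_cases hz : M.mulVec (w g) = 0
  · by_cases hz' : M.mulVec (w g') = 0
    · exfalso
      have hM0 : M = 0 := matrix_eq_zero_of_kills hind hz hz'
      apply hhne
      apply Subtype.coe_injective
      have h1 : (ρ h : Matrix (Fin 2) (Fin 2) ℤ) = 1 := by
        have := sub_eq_zero.mp (hM ▸ hM0)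
        simpa using this
      simpa using h1
    · obtain ⟨h1, h2⟩ := hker g' hg'
      exact ⟨h * g' * h⁻¹ * g'⁻¹, h1, h2, by
        rw [cocycle_comm ρ w hw hg' h]; exact hz'⟩
  · obtain ⟨h1, h2⟩ := hker g hg
    exact ⟨h * g * h⁻¹ * g⁻¹, h1, h2, by
      rw [cocycle_comm ρ w hw hg h]; exact hz⟩

/-- For a product of two non-isogenous elliptic schemes with both sections non-torsion:
the group `{(w₁(g), w₂(g)) : g ∈ ker ρ₁ ∩ ker ρ₂}` spans a `ℚ`-subspace of `ℚ⁴` of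
dimension exactly `2` or exactly `4`. -/
theorem relative_monodromy_rank_two_or_four_nonisogenous
    {G : Type*} [Group G] (ρ₁ ρ₂ : G →* Matrix.SpecialLinearGroup (Fin 2) ℤ)
    (w₁ w₂ : G → Fin 2 → ℤ)
    (hw₁ : ∀ g h : G, w₁ (g * h) = w₁ g + (ρ₁ g : Matrix (Fin 2) (Fin 2) ℤ).mulVec (w₁ h))
    (hw₂ : ∀ g h : G, w₂ (g * h) = w₂ g + (ρ₂ g : Matrix (Fin 2) (Fin 2) ℤ).mulVec (w₂ h))
    (hirr₁ : ∀ v : Fin 2 → ℤ, v ≠ 0 →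
      ∃ g : G, ZIndep ((ρ₁ g : Matrix (Fin 2) (Fin 2) ℤ).mulVec v) v)
    (hirr₂ : ∀ v : Fin 2 → ℤ, v ≠ 0 →
      ∃ g : G, ZIndep ((ρ₂ g : Matrix (Fin 2) (Fin 2) ℤ).mulVec v) v)
    (hrk₁ : ∃ g ∈ ρ₁.ker, ∃ g' ∈ ρ₁.ker, ZIndep (w₁ g) (w₁ g'))
    (hrk₂ : ∃ g ∈ ρ₂.ker, ∃ g' ∈ ρ₂.ker, ZIndep (w₂ g) (w₂ g'))
    (hne₁ : ∃ g ∈ ρ₂.ker, ρ₁ g ≠ 1) (hne₂ : ∃ g' ∈ ρ₁.ker, ρ₂ g' ≠ 1) :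
    Module.finrank ℚ (Submodule.span ℚ
        {p : (Fin 2 → ℚ) × (Fin 2 → ℚ) |
          ∃ g, (g ∈ ρ₁.ker ∧ g ∈ ρ₂.ker) ∧ p = (castQ (w₁ g), castQ (w₂ g))}) = 2 ∨
    Module.finrank ℚ (Submodule.span ℚ
        {p : (Fin 2 → ℚ) × (Fin 2 → ℚ) |
          ∃ g, (g ∈ ρ₁.ker ∧ g ∈ ρ₂.ker) ∧ p = (castQ (w₁ g), castQ (w₂ g))}) = 4 := by
  set S : Set ((Fin 2 → ℚ) × (Fin 2 → ℚ)) :=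
    {p | ∃ g, (g ∈ ρ₁.ker ∧ g ∈ ρ₂.ker) ∧ p = (castQ (w₁ g), castQ (w₂ g))} with hSdef
  set V : Submodule ℚ ((Fin 2 → ℚ) × (Fin 2 → ℚ)) := Submodule.span ℚ S with hVdef
  -- the diagonal action
  set L : G → ((Fin 2 → ℚ) × (Fin 2 → ℚ)) →ₗ[ℚ] ((Fin 2 → ℚ) × (Fin 2 → ℚ)) :=
    fun g => ((matQ (ρ₁ g)).mulVecLin).prodMap ((matQ (ρ₂ g)).mulVecLin) with hLdef
  have himg : ∀ g : G, (L g) '' S ⊆ S := by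
    rintro g p ⟨p₀, ⟨k, ⟨hk1, hk2⟩, rfl⟩, rfl⟩
    rw [MonoidHom.mem_ker] at hk1 hk2
    refine ⟨g * k * g⁻¹, ⟨?_, ?_⟩, ?_⟩
    · rw [MonoidHom.mem_ker]; simp [map_mul, map_inv, hk1]
    · rw [MonoidHom.mem_ker]; simp [map_mul, map_inv, hk2]
    · rw [cocycle_conj ρ₁ w₁ hw₁ hk1 g, cocycle_conj ρ₂ w₂ hw₂ hk2 g]
      simp only [hLdef, LinearMap.prodMap_apply, Matrix.mulVecLin_apply]
      rw [castQ_mulVec, castQ_mulVec]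
  have hmapV : ∀ g : G, Submodule.map (L g) V ≤ V := by
    intro g
    rw [hVdef, Submodule.map_span]
    exact Submodule.span_le.mpr ((himg g).trans Submodule.subset_span)
  -- first projection of V is everything
  have hfst : Submodule.map (LinearMap.fst ℚ (Fin 2 → ℚ) (Fin 2 → ℚ)) V = ⊤ := by
    apply invariant_eq_top ρ₁ hirr₁
    · intro g y hy
      obtain ⟨p, hpV, hp⟩ := hy
      refine ⟨L g p, hmapV g (Submodule.mem_map_of_mem hpV), ?_⟩
      simp only [hLdef, LinearMap.prodMap_apply, LinearMap.fst_apply,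
        Matrix.mulVecLin_apply]
      exact congrArg _ hp
    · obtain ⟨k₀, hk1, hk2, hk0⟩ := exists_K_nonzero ρ₁ ρ₂ w₁ hw₁ hrk₁ hne₁
      rw [Submodule.ne_bot_iff]
      refine ⟨castQ (w₁ k₀), ⟨(castQ (w₁ k₀), castQ (w₂ k₀)), ?_, rfl⟩, ?_⟩
      · exact Submodule.subset_span ⟨k₀, ⟨MonoidHom.mem_ker.mpr hk1, MonoidHom.mem_ker.mpr hk2⟩, rfl⟩
      · intro h
        exact hk0 (castQ_eq_zero h)
  -- the fiber over 0
  set W₂ : Submodule ℚ (Fin 2 → ℚ) :=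
    Submodule.comap (LinearMap.inr ℚ (Fin 2 → ℚ) (Fin 2 → ℚ)) V with hW2def
  have hW2inv : ∀ g : G, ∀ y ∈ W₂, (matQ (ρ₂ g)).mulVec y ∈ W₂ := by
    intro g y hy
    have hyV : (LinearMap.inr ℚ (Fin 2 → ℚ) (Fin 2 → ℚ)) y ∈ V := hy
    have : L g ((LinearMap.inr ℚ (Fin 2 → ℚ) (Fin 2 → ℚ)) y) ∈ V :=
      hmapV g (Submodule.mem_map_of_mem hyV)
    have heq : L g ((LinearMap.inr ℚ (Fin 2 → ℚ) (Fin 2 → ℚ)) y) =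
        (LinearMap.inr ℚ (Fin 2 → ℚ) (Fin 2 → ℚ)) ((matQ (ρ₂ g)).mulVec y) := by
      simp [hLdef]
    rw [heq] at this
    exact this
  -- identification of the kernel piece
  have hmapW2 : Submodule.map (LinearMap.inr ℚ (Fin 2 → ℚ) (Fin 2 → ℚ)) W₂ =
      LinearMap.ker (LinearMap.fst ℚ (Fin 2 → ℚ) (Fin 2 → ℚ)) ⊓ V := by
    ext p
    constructor
    · rintro ⟨y, hy, rfl⟩
      exact ⟨by simp, hy⟩
    · rintro ⟨h1, h2⟩
      have hp1 : p.1 = 0 := h1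
      have hpeq : (LinearMap.inr ℚ (Fin 2 → ℚ) (Fin 2 → ℚ)) p.2 = p := by
        ext
        · simp [hp1]
        · simp
      refine ⟨p.2, ?_, hpeq⟩
      show (LinearMap.inr ℚ (Fin 2 → ℚ) (Fin 2 → ℚ)) p.2 ∈ V
      rw [hpeq]; exact h2
  -- rank computation
  have hdim2 : Module.finrank ℚ (Fin 2 → ℚ) = 2 := by simp
  set f : V →ₗ[ℚ] (Fin 2 → ℚ) :=
    (LinearMap.fst ℚ (Fin 2 → ℚ) (Fin 2 → ℚ)).comp V.subtype with hfdef
  have hrn := LinearMap.finrank_range_add_finrank_ker f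
  have hrange : LinearMap.range f = Submodule.map (LinearMap.fst ℚ (Fin 2 → ℚ) (Fin 2 → ℚ)) V := by
    rw [hfdef, LinearMap.range_comp, Submodule.range_subtype]
  have hrange2 : Module.finrank ℚ (LinearMap.range f) = 2 := by
    rw [hrange, hfst, finrank_top, hdim2]
  have hkerf : LinearMap.ker f = Submodule.comap V.subtype
      (LinearMap.ker (LinearMap.fst ℚ (Fin 2 → ℚ) (Fin 2 → ℚ)) ⊓ V) := by
    rw [hfdef, LinearMap.ker_comp, Submodule.comap_inf, Submodule.comap_subtype_self, inf_top_eq]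
  have hkerrank : Module.finrank ℚ (LinearMap.ker f) =
      Module.finrank ℚ (LinearMap.ker (LinearMap.fst ℚ (Fin 2 → ℚ) (Fin 2 → ℚ)) ⊓ V :
        Submodule ℚ ((Fin 2 → ℚ) × (Fin 2 → ℚ))) := by
    rw [hkerf]
    exact LinearEquiv.finrank_eq (Submodule.comapSubtypeEquivOfLe inf_le_right)
  have hW2rank : Module.finrank ℚ W₂ =
      Module.finrank ℚ (LinearMap.ker (LinearMap.fst ℚ (Fin 2 → ℚ) (Fin 2 → ℚ)) ⊓ V :
        Submodule ℚ ((Fin 2 → ℚ) × (Fin 2 → ℚ))) := by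
    rw [← hmapW2]
    exact LinearEquiv.finrank_eq (Submodule.equivMapOfInjective _ LinearMap.inr_injective W₂)
  by_cases hb : W₂ = ⊥
  · left
    have h0 : Module.finrank ℚ (LinearMap.ker f) = 0 := by
      rw [hkerrank, ← hW2rank, hb]
      exact finrank_bot ℚ _
    have : Module.finrank ℚ V = 2 := by omega
    exact this
  · right
    have hW2top : W₂ = ⊤ := invariant_eq_top ρ₂ hirr₂ W₂ hW2inv hb
    have h2 : Module.finrank ℚ (LinearMap.ker f) = 2 := by
      rw [hkerrank, ← hW2rank, hW2top, finrank_top, hdim2]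
    have : Module.finrank ℚ V = 4 := by omega
    exact this
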